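/- Let G be a finite simple undirected graph, let v be a vertex of G, and let H_v be the auxiliary graph of v. Suppose u ∈ N1 has degree exactly 1 in H_v, with unique H_v-neighbour w, and suppose S is a modulator of G with v ∉ S and u ∈ S. Then (S \ {u}) ∪ {w} is also a modulator of G, and its cardinality is at most |S|. -/

import Mathlib

variable {V : Type*}

/-- The graph obtained from `G` by deleting the vertex set `S`
(deleted vertices become isolated, which does not affect cluster-ness of the rest). -/
def SimpleGraph.deleteSet (G : SimpleGraph V) (S : Set V) : SimpleGraph V where
  Adj a b := G.Adj a b ∧ a ∉ S ∧ b ∉ S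
  symm := by
    constructor
    intro a b h
    exact ⟨h.1.symm, h.2.2, h.2.1⟩
  loopless := by
    constructor
    intro a h
    exact G.loopless.irrefl a h.1

/-- `(u, v, w)` is a `P₃` in `G`: an induced path on the three distinct vertices
`u`, `v`, `w` with edges `uv` and `vw` and non-edge `uw`. -/
def IsP3 (G : SimpleGraph V) (u v w : V) : Prop :=
  G.Adj u v ∧ G.Adj v w ∧ ¬ G.Adj u w ∧ u ≠ w

/-- A cluster graph is a graph containing no `P₃`. -/
def IsClusterGraph (G : SimpleGraph V) : Prop :=
  ∀ u v w : V, ¬ IsP3 G u v w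

/-- `S` is a modulator of `G`: deleting `S` from `G` yields a cluster graph. -/
def IsModulator (G : SimpleGraph V) (S : Set V) : Prop :=
  IsClusterGraph (G.deleteSet S)

/-- A solution is a modulator of minimum cardinality. -/
def IsSolution (G : SimpleGraph V) (S : Set V) : Prop :=
  IsModulator G S ∧ ∀ T : Set V, IsModulator G T → S.ncard ≤ T.ncard

/-- `N1 G v` is the neighbourhood of `v` in `G`. -/
def N1 (G : SimpleGraph V) (v : V) : Set V := G.neighborSet v

/-- `N2 G v = N_G(N_G[v])` is the set of vertices at distance exactly `2` from `v`. -/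
def N2 (G : SimpleGraph V) (v : V) : Set V :=
  {w | w ≠ v ∧ ¬ G.Adj v w ∧ ∃ u, G.Adj v u ∧ G.Adj u w}

/-- Adjacency in the auxiliary graph `H_v`: non-edges of `G` inside `N1`,
and edges of `G` between `N1` and `N2`. -/
def HvAdj (G : SimpleGraph V) (v a b : V) : Prop :=
  (a ∈ N1 G v ∧ b ∈ N1 G v ∧ a ≠ b ∧ ¬ G.Adj a b) ∨
  (a ∈ N1 G v ∧ b ∈ N2 G v ∧ G.Adj a b) ∨
  (b ∈ N1 G v ∧ a ∈ N2 G v ∧ G.Adj a b)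

/-- `X` is a vertex cover of the auxiliary graph `H_v`: a subset of
`V(H_v) = N1 ∪ N2` meeting every edge of `H_v`. -/
def IsVCHv (G : SimpleGraph V) (v : V) (X : Set V) : Prop :=
  X ⊆ N1 G v ∪ N2 G v ∧ ∀ a b : V, HvAdj G v a b → a ∈ X ∨ b ∈ X

/-- `X` is a vertex cover of the graph `H`. -/
def IsVC (H : SimpleGraph V) (X : Set V) : Prop :=
  ∀ a b : V, H.Adj a b → a ∈ X ∨ b ∈ X

/-- The connected component of `v` in `G` is a clique. -/
def ComponentIsClique (G : SimpleGraph V) (v : V) : Prop :=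
  ∀ u w : V, G.Reachable v u → G.Reachable v w → u ≠ w → G.Adj u w

/-- The auxiliary graph `H_v` is an `s`-skein with seagulls `(x i, y i, z i)`:
it is the disjoint union of `s` seagulls (paths on three vertices with middle
vertex `y i ∈ N1` and endpoints `x i, z i ∈ N2`) and isolated vertices. -/
def IsSkein (G : SimpleGraph V) (v : V) (s : ℕ) (x y z : Fin s → V) : Prop :=
  (∀ i, x i ∈ N2 G v ∧ y i ∈ N1 G v ∧ z i ∈ N2 G v) ∧
  (∀ i, x i ≠ z i) ∧
  (∀ i j, i ≠ j → ({x i, y i, z i} ∩ {x j, y j, z j} : Set V) = ∅) ∧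
  (∀ i, HvAdj G v (x i) (y i) ∧ HvAdj G v (y i) (z i) ∧ ¬ HvAdj G v (x i) (z i)) ∧
  (∀ a b : V, HvAdj G v a b →
    ∃ i, (a = x i ∧ b = y i) ∨ (a = y i ∧ b = x i) ∨
         (a = y i ∧ b = z i) ∨ (a = z i ∧ b = y i))

/-!
Since `u` has no `H_v`-neighbour besides `w`, the vertices `u` and `v` are adjacent closed twins
in `G - w`: a neighbour of `u` outside `N[v]` lies in `N2` and is an `H_v`-neighbour, and so is a
neighbour of `v` not adjacent to `u`. Hence, after deleting `(S \ {u}) ∪ {w}`, any `P₃` through `u`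
can be rerouted through `v`, giving a `P₃` avoiding `S`.
-/

section Modulator

variable {G : SimpleGraph V} {S T : Set V} {u v : V}

theorem IsP3.symm {a b c : V} (h : IsP3 G a b c) : IsP3 G c b a :=
  ⟨h.2.1.symm, h.1.symm, fun hca => h.2.2.1 hca.symm, h.2.2.2.symm⟩

theorem isP3_deleteSet_iff {a b c : V} :
    IsP3 (G.deleteSet S) a b c ↔ a ∉ S ∧ b ∉ S ∧ c ∉ S ∧ IsP3 G a b c := by
  simp only [IsP3, SimpleGraph.deleteSet]
  tauto

theorem isModulator_iff :
    IsModulator G S ↔ ∀ a b c, a ∉ S → b ∉ S → c ∉ S → ¬ IsP3 G a b c := by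
  simp only [IsModulator, IsClusterGraph, isP3_deleteSet_iff, not_and]

theorem IsModulator.mono (hS : IsModulator G S) (hST : S ⊆ T) : IsModulator G T :=
  isModulator_iff.2 fun a b c ha hb hc =>
    isModulator_iff.1 hS a b c (fun h => ha (hST h)) (fun h => hb (hST h)) (fun h => hc (hST h))

theorem IsModulator.of_insert_of_closed_twin (hS : IsModulator G (insert u S)) (hvS : v ∉ S)
    (huv : G.Adj u v) (htwin : ∀ x ∉ S, x ≠ u → x ≠ v → (G.Adj u x ↔ G.Adj v x)) :
    IsModulator G S := by
  rw [isModulator_iff] at hS ⊢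
  have hkeep : ∀ x ∉ S, x ≠ u → x ∉ insert u S := fun x hx hxu h =>
    (Set.mem_insert_iff.1 h).elim hxu hx
  have hv : v ∉ insert u S := hkeep v hvS huv.ne.symm
  have endpoint : ∀ b c, b ∉ S → c ∉ S → ¬ IsP3 G u b c := by
    rintro b c hb hc ⟨hub, hbc, hnuc, huc⟩
    by_cases hbv : b = v
    · subst hbv
      exact hnuc ((htwin c hc huc.symm hbc.ne.symm).2 hbc)
    by_cases hcv : c = v
    · subst hcv
      exact hnuc huv
    exact hS v b c hv (hkeep b hb hub.ne.symm) (hkeep c hc huc.symm)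
      ⟨(htwin b hb hub.ne.symm hbv).1 hub, hbc,
        fun hvc => hnuc ((htwin c hc huc.symm hcv).2 hvc), Ne.symm hcv⟩
  have middle : ∀ a c, a ∉ S → c ∉ S → ¬ IsP3 G a u c := by
    rintro a c ha hc ⟨hau, huc, hnac, hac⟩
    by_cases hav : a = v
    · subst hav
      exact hnac ((htwin c hc huc.ne.symm (Ne.symm hac)).1 huc)
    by_cases hcv : c = v
    · subst hcv
      exact hnac ((htwin a ha hau.ne hac).1 hau.symm).symm
    exact hS a v c (hkeep a ha hau.ne) hv (hkeep c hc huc.ne.symm)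
      ⟨((htwin a ha hau.ne hav).1 hau.symm).symm, (htwin c hc huc.ne.symm hcv).1 huc, hnac, hac⟩
  intro a b c ha hb hc hP
  by_cases hau : a = u
  · exact endpoint b c hb hc (hau ▸ hP)
  by_cases hcu : c = u
  · exact endpoint b a hb ha (hcu ▸ hP.symm)
  by_cases hbu : b = u
  · exact middle a c ha hc (hbu ▸ hP)
  exact hS a b c (hkeep a ha hau) (hkeep b hb hbu) (hkeep c hc hcu) hP

end Modulator

section AuxiliaryGraph

variable {G : SimpleGraph V} {v a b : V}

theorem HvAdj.right_ne_center (h : HvAdj G v a b) : b ≠ v := by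
  rcases h with ⟨-, hb, -⟩ | ⟨-, hb, -⟩ | ⟨hb, -⟩
  · exact (G.ne_of_adj hb).symm
  · exact hb.1
  · exact (G.ne_of_adj hb).symm

theorem adj_iff_adj_center_of_hvAdj_unique {w : V} (ha : a ∈ N1 G v)
    (huniq : ∀ b, HvAdj G v a b → b = w) (hba : b ≠ a) (hbv : b ≠ v) (hbw : b ≠ w) :
    G.Adj a b ↔ G.Adj v b := by
  constructor
  · intro hab
    by_contra hvb
    exact hbw (huniq b (Or.inr (Or.inl ⟨ha, ⟨hbv, hvb, a, ha, hab⟩, hab⟩)))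
  · intro hvb
    by_contra hab
    exact hbw (huniq b (Or.inl ⟨ha, hvb, hba.symm, hab⟩))

end AuxiliaryGraph

/-- If `u ∈ N1` has degree exactly `1` in `H_v` with unique
neighbour `w`, and `S` is a modulator with `v ∉ S` and `u ∈ S`, then
`(S \ {u}) ∪ {w}` is a modulator of cardinality at most `|S|`. -/
theorem stmt_10 [Fintype V] (G : SimpleGraph V) (v u w : V)
    (hu : u ∈ N1 G v) (huw : HvAdj G v u w)
    (hdeg : ∀ b : V, HvAdj G v u b → b = w)
    (S : Set V) (hS : IsModulator G S) (hv : v ∉ S) (huS : u ∈ S) :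
    IsModulator G ((S \ {u}) ∪ {w}) ∧ ((S \ {u}) ∪ {w}).ncard ≤ S.ncard := by
  refine ⟨?_, ?_⟩
  · have hsub : S ⊆ insert u ((S \ {u}) ∪ {w}) := fun x hx => by
      by_cases hxu : x = u <;> simp [hxu, hx]
    refine (hS.mono hsub).of_insert_of_closed_twin ?_ hu.symm fun x hx hxu hxv => ?_
    · simp [hv, huw.right_ne_center.symm]
    · exact adj_iff_adj_center_of_hvAdj_unique hu hdeg hxu hxv (by rintro rfl; simp at hx)
  · calc ((S \ {u}) ∪ {w}).ncard = (insert w (S \ {u})).ncard := by rw [Set.union_singleton]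
      _ ≤ (S \ {u}).ncard + 1 := Set.ncard_insert_le _ _
      _ = S.ncard := Set.ncard_sdiff_singleton_add_one huS
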